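/- arXiv:1301.3230 — 3 statements merged into one kernel-verified Lean document; each statement's English description precedes it below -/
import Mathlib

section
/- Let k ≥ 1 and let p_1, ..., p_k be reals with 0 ≤ p_i ≤ 1/k for all i. Then ∑_{i=1}^k ∏_{j≠i} (1 - p_j) ≥ 1. -/
/-!
By the Weierstrass product inequality `∏ (1 - pⱼ) ≥ 1 - ∑ pⱼ` (valid for `0 ≤ pⱼ ≤ 1`), the `i`-th
product is at least `1 - (S - pᵢ)` with `S = ∑ pⱼ`. Summing over `i` gives `k - (k - 1) S`, which is
at least `1` because `S ≤ k · (1 / k) = 1`.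
-/

open Finset

theorem Finset.one_sub_sum_le_prod_one_sub {ι R : Type*} [CommRing R] [LinearOrder R]
    [IsStrictOrderedRing R] [DecidableEq ι] (s : Finset ι) (p : ι → R)
    (h0 : ∀ i ∈ s, 0 ≤ p i) (h1 : ∀ i ∈ s, p i ≤ 1) :
    1 - ∑ i ∈ s, p i ≤ ∏ i ∈ s, (1 - p i) := by
  induction s using Finset.induction with
  | empty => simp
  | insert a s ha ih =>
    rw [sum_insert ha, prod_insert ha]
    have hs_nonneg : 0 ≤ ∑ i ∈ s, p i := sum_nonneg fun i hi => h0 i (mem_insert_of_mem hi)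
    have ih := ih (fun i hi => h0 i (mem_insert_of_mem hi)) fun i hi => h1 i (mem_insert_of_mem hi)
    have hpa₀ := h0 a (mem_insert_self a s)
    have hpa₁ := h1 a (mem_insert_self a s)
    calc 1 - (p a + ∑ i ∈ s, p i) ≤ (1 - p a) * (1 - ∑ i ∈ s, p i) := by
          nlinarith [mul_nonneg hpa₀ hs_nonneg]
      _ ≤ (1 - p a) * ∏ i ∈ s, (1 - p i) := mul_le_mul_of_nonneg_left ih (by linarith)

theorem Finset.sum_one_sub_sum_erase {ι R : Type*} [CommRing R] [DecidableEq ι]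
    (s : Finset ι) (p : ι → R) :
    ∑ i ∈ s, (1 - ∑ j ∈ s.erase i, p j) = #s - (#s - 1) * ∑ i ∈ s, p i := by
  rw [sum_congr rfl fun i hi => by rw [sum_erase_eq_sub hi], sum_sub_distrib, sum_sub_distrib,
    sum_const, sum_const, nsmul_one, nsmul_eq_mul]
  ring

theorem stmt1 (k : ℕ) (hk : 1 ≤ k) (p : Fin k → ℝ)
    (h0 : ∀ i, 0 ≤ p i) (h1 : ∀ i, p i ≤ 1 / (k : ℝ)) :
    1 ≤ ∑ i : Fin k, ∏ j ∈ univ.erase i, (1 - p j) := by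
  have hk' : (1 : ℝ) ≤ k := by exact_mod_cast hk
  have hp_le_one : ∀ i, p i ≤ 1 := fun i => (h1 i).trans (div_le_one_of_le₀ hk' (by positivity))
  have hsum_le_one : ∑ i, p i ≤ 1 := by
    calc ∑ i, p i ≤ ∑ _i : Fin k, 1 / (k : ℝ) := sum_le_sum fun i _ => h1 i
      _ = 1 := by simp only [sum_const, card_univ, Fintype.card_fin, nsmul_eq_mul]; field_simp
  calc (1 : ℝ) ≤ k - (k - 1) * ∑ i, p i := by nlinarith
    _ = ∑ i, (1 - ∑ j ∈ univ.erase i, p j) := by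
        rw [sum_one_sub_sum_erase, card_univ, Fintype.card_fin]
    _ ≤ ∑ i, ∏ j ∈ univ.erase i, (1 - p j) :=
        sum_le_sum fun i _ => one_sub_sum_le_prod_one_sub _ p (fun j _ => h0 j)
          fun j _ => hp_le_one j
end

section
/- Let k > 2 and let p_1, ..., p_k be reals with 0 < p_i ≤ 1/k for all i. Then ∑_{i=1}^k ∏_{j≠i} (1 - p_j) > 1. -/
/-
Each user is silent with probability at least `1 - 1/k`, so every summand is at least
`(1 - 1/k)^(k-1)`, and the strict Bernoulli inequality gives `(1 - 1/k)^(k-1) > 1 - (k-1)/k = 1/k`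
as soon as the exponent `k - 1` exceeds `1`.
-/

theorem one_add_mul_lt_pow {a : ℝ} (ha : -1 ≤ a) (ha0 : a ≠ 0) {m : ℕ} (hm : 2 ≤ m) :
    1 + m * a < (1 + a) ^ m := by
  have hm' : (1 : ℝ) < m := by exact_mod_cast hm
  simpa [mul_comm, Real.rpow_natCast] using one_add_mul_self_lt_rpow_one_add ha ha0 hm'

theorem one_div_lt_one_sub_one_div_pow_pred {n : ℕ} (hn : 2 < n) :
    1 / (n : ℝ) < (1 - 1 / n) ^ (n - 1) := by
  have hn' : (3 : ℝ) ≤ n := by exact_mod_cast hn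
  have hbern := one_add_mul_lt_pow (a := -(1 / n)) (m := n - 1)
    (by rw [neg_le_neg_iff, div_le_one] <;> linarith) (neg_ne_zero.2 (by positivity)) (by omega)
  have hlhs : 1 + ((n - 1 : ℕ) : ℝ) * -(1 / n) = 1 / n := by
    rw [Nat.cast_sub (by omega)]
    field_simp
    ring
  rwa [hlhs, ← sub_eq_add_neg] at hbern

theorem pow_le_prod_erase_one_sub {ι : Type*} [Fintype ι] [DecidableEq ι] {p : ι → ℝ} {c : ℝ}
    (hp : ∀ j, p j ≤ c) (hc : c ≤ 1) (i : ι) :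
    (1 - c) ^ (Fintype.card ι - 1) ≤ ∏ j ∈ Finset.univ.erase i, (1 - p j) := by
  rw [← Finset.card_univ, ← Finset.card_erase_of_mem (Finset.mem_univ i), ← Finset.prod_const]
  exact Finset.prod_le_prod (fun _ _ => sub_nonneg.2 hc) (fun j _ => sub_le_sub_left (hp j) 1)

open Finset in
theorem stmt2_general (k : ℕ) (hk : 2 < k) (p : Fin k → ℝ)
    (h1 : ∀ i, p i ≤ 1 / (k : ℝ)) :
    1 < ∑ i : Fin k, ∏ j ∈ univ.erase i, (1 - p j) := by
  have hk_pos : (0 : ℝ) < k := by positivity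
  have hk_inv_le : 1 / (k : ℝ) ≤ 1 := by
    rw [div_le_one hk_pos]
    exact_mod_cast hk.le.trans' (by norm_num)
  calc (1 : ℝ) = k * (1 / k) := by field_simp
    _ < k * (1 - 1 / k) ^ (k - 1) :=
        mul_lt_mul_of_pos_left (one_div_lt_one_sub_one_div_pow_pred hk) hk_pos
    _ = ∑ _i : Fin k, (1 - 1 / (k : ℝ)) ^ (Fintype.card (Fin k) - 1) := by simp
    _ ≤ ∑ i : Fin k, ∏ j ∈ univ.erase i, (1 - p j) :=
        sum_le_sum fun i _ => pow_le_prod_erase_one_sub h1 hk_inv_le i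

open Finset in
theorem stmt2 (k : ℕ) (hk : 2 < k) (p : Fin k → ℝ)
    (h0 : ∀ i, 0 < p i) (h1 : ∀ i, p i ≤ 1 / (k : ℝ)) :
    1 < ∑ i : Fin k, ∏ j ∈ univ.erase i, (1 - p j) :=
  stmt2_general k hk p h1
end

section
/- Let S be a finite set of users with ON probabilities p_i ∈ (0,1), and consider any ordered schedule over S in a τ-slot frame with throughputs d_i = P(∑_{j ≤ position of i} X_j ≤ τ), where X_j are independent Geometric(p_j) on {1,2,...} in the schedule's order. Then ∑_{i∈S} d_i/p_i ≤ τ. -/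
/-!
Let `S_m = X_0 + ⋯ + X_m`, so that `d_m = P(S_m ≤ τ)`. By memorylessness of `X_m`,
`d_m / p_m = E[min (S_m, τ)] - E[min (S_{m-1}, τ)]`, with `E[min (S, τ)] = ∑_{s < τ} P(S > s)`.
Summing over `m` telescopes to `E[min (S_{k-1}, τ)] ≤ τ`.
-/

/-- `schedThroughput p τ m` is the probability that the `(m+1)`-st user in the
ordered schedule delivers its packet within the `τ`-slot frame, i.e.
`P(X_0 + ⋯ + X_m ≤ τ)` where `X_j` are independent geometric (on `{1,2,…}`)
with parameters `p j`; here `x j : ℕ` encodes `X_j = x j + 1`. -/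
noncomputable def schedThroughput {k : ℕ} (p : Fin k → ℝ) (τ : ℕ) (m : Fin k) : ℝ :=
  ∑' x : Fin (m.1 + 1) → ℕ,
    if (∑ j, (x j + 1)) ≤ τ then ∏ j : Fin (m.1 + 1), (1 - p (Fin.castLE m.2 j)) ^ (x j) * p (Fin.castLE m.2 j)
    else 0

open Finset

/-- `geomSumCDF q n t = P(X_0 + ⋯ + X_{n-1} ≤ t)` for independent `X_j` geometric on `{1, 2, …}`
with parameter `q j`, obtained by conditioning on `X_{n-1} = a + 1`. -/
noncomputable def geomSumCDF (q : ℕ → ℝ) : ℕ → ℕ → ℝ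
  | 0, _ => 1
  | n + 1, t => ∑ a ∈ range t, (1 - q n) ^ a * q n * geomSumCDF q n (t - 1 - a)

section

variable (q : ℕ → ℝ)

lemma geomSumCDF_nonneg (hq0 : ∀ i, 0 ≤ q i) (hq1 : ∀ i, q i ≤ 1) (n t : ℕ) :
    0 ≤ geomSumCDF q n t := by
  induction n generalizing t with
  | zero => exact zero_le_one
  | succ n ih =>
    have : 0 ≤ 1 - q n := sub_nonneg.2 (hq1 n)
    exact sum_nonneg fun a _ => by have := hq0 n; have := ih (t - 1 - a); positivity

/-- Memorylessness: condition on whether `X_n` succeeds in its first slot. -/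
lemma geomSumCDF_succ_succ (n t : ℕ) :
    geomSumCDF q (n + 1) (t + 1)
      = q n * geomSumCDF q n t + (1 - q n) * geomSumCDF q (n + 1) t := by
  simp only [geomSumCDF, sum_range_succ', mul_sum]
  rw [add_comm]
  congr 1
  · simp
  · refine sum_congr rfl fun a _ => ?_
    rw [show t + 1 - 1 - (a + 1) = t - 1 - a by omega]
    ring

lemma geomSumCDF_succ_div (n t : ℕ) (hq : q n ≠ 0) :
    geomSumCDF q (n + 1) t / q n
      = ∑ s ∈ range t, (geomSumCDF q n s - geomSumCDF q (n + 1) s) := by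
  induction t with
  | zero => simp [geomSumCDF]
  | succ t ih =>
    rw [sum_range_succ, ← ih, geomSumCDF_succ_succ]
    field_simp
    ring

lemma sum_geomSumCDF_div_le (hq0 : ∀ i, 0 < q i) (hq1 : ∀ i, q i ≤ 1) (k τ : ℕ) :
    ∑ m ∈ range k, geomSumCDF q (m + 1) τ / q m ≤ τ := by
  calc ∑ m ∈ range k, geomSumCDF q (m + 1) τ / q m
      = ∑ s ∈ range τ, ∑ m ∈ range k, (geomSumCDF q m s - geomSumCDF q (m + 1) s) := by
        rw [sum_comm]
        exact sum_congr rfl fun m _ => geomSumCDF_succ_div q m τ (hq0 m).ne'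
    _ = ∑ s ∈ range τ, (1 - geomSumCDF q k s) := by
        simp only [sum_range_sub']
        rfl
    _ ≤ ∑ s ∈ range τ, 1 :=
        sum_le_sum fun s _ => by
          linarith [geomSumCDF_nonneg q (fun i => (hq0 i).le) hq1 k s]
    _ = τ := by simp

noncomputable def geomMassLE (t : ℕ) {n : ℕ} (x : Fin n → ℕ) : ℝ :=
  if ∑ j, (x j + 1) ≤ t then ∏ j : Fin n, (1 - q j) ^ x j * q j else 0

lemma geomMassLE_snoc (t : ℕ) {n : ℕ} (x : Fin n → ℕ) (a : ℕ) :
    geomMassLE q t (Fin.snoc x a : Fin (n + 1) → ℕ)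
      = if a < t then (1 - q n) ^ a * q n * geomMassLE q (t - 1 - a) x else 0 := by
  simp only [geomMassLE, Fin.sum_univ_castSucc, Fin.prod_univ_castSucc, Fin.snoc_castSucc,
    Fin.snoc_last, Fin.val_castSucc, Fin.val_last]
  split_ifs <;> first | (exfalso; omega) | ring

lemma geomMassLE_eq_zero (t : ℕ) {n : ℕ} (x : Fin n → ℕ)
    (hx : x ∉ Fintype.piFinset fun _ => range t) : geomMassLE q t x = 0 := by
  simp only [Fintype.mem_piFinset, mem_range, not_forall, not_lt] at hx
  obtain ⟨j, hj⟩ := hx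
  have : x j + 1 ≤ ∑ j, (x j + 1) :=
    single_le_sum (f := fun j => x j + 1) (fun _ _ => Nat.zero_le _) (mem_univ j)
  exact if_neg (by omega)

lemma summable_geomMassLE (t n : ℕ) : Summable (geomMassLE q t (n := n)) :=
  summable_of_ne_finset_zero (geomMassLE_eq_zero q t)

lemma tsum_geomMassLE (n t : ℕ) : ∑' x, geomMassLE q t (n := n) x = geomSumCDF q n t := by
  induction n generalizing t with
  | zero => simp [geomMassLE, geomSumCDF]
  | succ n ih =>
    have hs : Summable fun c : ℕ × (Fin n → ℕ) => geomMassLE q t (Fin.snocEquiv (fun _ => ℕ) c) :=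
      (summable_geomMassLE q t (n + 1)).comp_injective (Fin.snocEquiv _).injective
    rw [← (Fin.snocEquiv fun _ => ℕ).tsum_eq, hs.tsum_prod' fun a => hs.comp_injective
      (Prod.mk_right_injective a)]
    change ∑' (a : ℕ) (x : Fin n → ℕ), geomMassLE q t (Fin.snoc x a : Fin (n + 1) → ℕ) = _
    simp only [geomMassLE_snoc]
    calc _ = ∑' a, if a < t then (1 - q n) ^ a * q n * geomSumCDF q n (t - 1 - a) else 0 := by
          refine tsum_congr fun a => ?_
          split_ifs
          · rw [tsum_mul_left, ih]
          · exact tsum_zero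
      _ = geomSumCDF q (n + 1) t := by
          rw [tsum_eq_sum (s := range t) fun a ha => if_neg (by simpa using ha)]
          exact sum_congr rfl fun a ha => if_pos (mem_range.1 ha)

end

lemma schedThroughput_eq_geomSumCDF {k : ℕ} (p : Fin k → ℝ) (q : ℕ → ℝ) (hpq : ∀ i, p i = q i)
    (τ : ℕ) (m : Fin k) : schedThroughput p τ m = geomSumCDF q (m + 1) τ := by
  simp only [← tsum_geomMassLE, schedThroughput, geomMassLE, hpq, Fin.val_castLE]

theorem stmt19_general (k : ℕ) (p : Fin k → ℝ) (hp : ∀ i, p i ∈ Set.Ioo (0 : ℝ) 1)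
    (τ : ℕ) :
    ∑ m : Fin k, schedThroughput p τ m / p m ≤ (τ : ℝ) := by
  set q : ℕ → ℝ := fun i => if h : i < k then p ⟨i, h⟩ else 1
  have hpq : ∀ i, p i = q i := fun i => by simp [q]
  have hq : ∀ i, q i ∈ Set.Ioc 0 1 := fun i => by
    by_cases h : i < k
    · simpa [q, h] using Set.Ioo_subset_Ioc_self (hp ⟨i, h⟩)
    · simp [q, h]
  calc ∑ m : Fin k, schedThroughput p τ m / p m
      = ∑ m ∈ range k, geomSumCDF q (m + 1) τ / q m := by
        simp only [← Fin.sum_univ_eq_sum_range, schedThroughput_eq_geomSumCDF p q hpq, hpq]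
    _ ≤ τ := sum_geomSumCDF_div_le q (fun i => (hq i).1) (fun i => (hq i).2) k τ

theorem stmt19 (k : ℕ) (p : Fin k → ℝ) (hp : ∀ i, p i ∈ Set.Ioo (0 : ℝ) 1)
    (τ : ℕ) (hτ : 1 ≤ τ) :
    ∑ m : Fin k, schedThroughput p τ m / p m ≤ (τ : ℝ) :=
  stmt19_general k p hp τ
end
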